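/- arXiv:2004.04088 — 5 statements merged into one kernel-verified Lean document; each statement's English description precedes it below -/
import Mathlib

section
/- If a (v,k)-modular Golomb ruler exists (with 2 ≤ k ≤ v), then a cyclic (v,k)-configuration exists; namely, the v translates X+t (t ∈ Z_v) of a (v,k)-MGR X form the block set of a cyclic (v,k)-configuration on point set Z_v. -/
/-- A symmetric (v,k)-configuration on the point set `ZMod v`: `v` blocks of size `k`,
no pair of distinct points in more than one block, every point in exactly `k` blocks. -/
def IsConfig (v k : ℕ) (B : Finset (Finset (ZMod v))) : Prop :=
  B.card = v ∧
  (∀ b ∈ B, b.card = k) ∧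
  (∀ b₁ ∈ B, ∀ b₂ ∈ B, ∀ x y : ZMod v,
    x ≠ y → x ∈ b₁ → y ∈ b₁ → x ∈ b₂ → y ∈ b₂ → b₁ = b₂) ∧
  (∀ x : ZMod v, (B.filter (fun b => x ∈ b)).card = k)

/-- A parallel class: a set of pairwise disjoint blocks whose union is the point set. -/
def IsParallelClass (v : ℕ) (P : Finset (Finset (ZMod v))) : Prop :=
  (∀ x : ZMod v, ∃ b ∈ P, x ∈ b) ∧
  (∀ b₁ ∈ P, ∀ b₂ ∈ P, b₁ ≠ b₂ → Disjoint b₁ b₂)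

/-- A resolution of the block set `B` into `r` parallel classes. -/
def IsResolution (v r : ℕ) (B : Finset (Finset (ZMod v)))
    (R : Finset (Finset (Finset (ZMod v)))) : Prop :=
  R.card = r ∧
  (∀ P ∈ R, P ⊆ B ∧ IsParallelClass v P) ∧
  (∀ b ∈ B, ∃! P, P ∈ R ∧ b ∈ P)

/-- The block set is invariant under the translation x ↦ x + 1 (mod v). -/
def CyclicBlocks (v : ℕ) (B : Finset (Finset (ZMod v))) : Prop :=
  ∀ b ∈ B, b.image (· + 1) ∈ B

/-- The resolution is invariant under the translation x ↦ x + 1 (mod v). -/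
def CyclicResolution (v : ℕ) (R : Finset (Finset (Finset (ZMod v)))) : Prop :=
  ∀ P ∈ R, P.image (fun b => b.image (· + 1)) ∈ R

/-- A (v,k)-modular Golomb ruler: a k-subset of `ZMod v` whose differences of
ordered pairs of distinct elements are pairwise distinct in `ZMod v`. -/
def IsMGR (v k : ℕ) (X : Finset (ZMod v)) : Prop :=
  X.card = k ∧
  ∀ a ∈ X, ∀ b ∈ X, ∀ c ∈ X, ∀ d ∈ X,
    a - b = c - d → (a = b ∧ c = d) ∨ (a = c ∧ b = d)

/-- A (v,k)-resolvable modular Golomb ruler: a (v,k)-MGR whose elements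
(taken as their canonical representatives in {0,…,v−1}) cover all k residue
classes modulo k. -/
def IsRMGR (v k : ℕ) (X : Finset (ZMod v)) : Prop :=
  IsMGR v k X ∧ ∀ r : ZMod k, ∃ x ∈ X, ((x.val : ZMod k) = r)

/-- The set of all v translates of X in `ZMod v`. -/
def AllTranslates (v : ℕ) (X : Finset (ZMod v)) : Finset (Finset (ZMod v)) :=
  (Finset.range v).image (fun t : ℕ => X.image (· + (t : ZMod v)))

/-- If a (v,k)-modular Golomb ruler exists (2 ≤ k ≤ v), then a cyclic
(v,k)-configuration exists: the v translates of the MGR form its block set. -/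
theorem cyclic_config_from_MGR (v k : ℕ) (hk : 2 ≤ k) (hkv : k ≤ v)
    (X : Finset (ZMod v)) (hX : IsMGR v k X) :
    IsConfig v k (AllTranslates v X) ∧ CyclicBlocks v (AllTranslates v X) := by

  have hv : 0 < v := lt_of_lt_of_le (by omega) hkv
  haveI : NeZero v := ⟨hv.ne'⟩
  obtain ⟨hcard, hgol⟩ := hX
  have h2 : 1 < X.card := by omega
  obtain ⟨a₀, ha₀, b₀, hb₀, hab₀⟩ := Finset.one_lt_card.mp h2
  -- translates are injective in t
  have hinj : ∀ s t : ZMod v, X.image (· + s) = X.image (· + t) → s = t := by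
    intro s t h
    have hmem : a₀ + s ∈ X.image (· + t) := by
      rw [← h]; exact Finset.mem_image_of_mem _ ha₀
    have hmem' : b₀ + s ∈ X.image (· + t) := by
      rw [← h]; exact Finset.mem_image_of_mem _ hb₀
    obtain ⟨a', ha', haa⟩ := Finset.mem_image.mp hmem
    obtain ⟨b', hb', hbb⟩ := Finset.mem_image.mp hmem'
    have hd : a' - a₀ = b' - b₀ := by
      have h1 : a' + t = a₀ + s := haa
      have h2 : b' + t = b₀ + s := hbb
      linear_combination h1 - h2
    rcases hgol a' ha' a₀ ha₀ b' hb' b₀ hb₀ hd with ⟨h1, _⟩ | ⟨_, h2⟩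
    · have hts : t = s := by linear_combination haa - h1
      exact hts.symm
    · exact absurd h2 hab₀
  have hAT : AllTranslates v X = Finset.univ.image (fun t : ZMod v => X.image (· + t)) := by
    ext b
    simp only [AllTranslates, Finset.mem_image, Finset.mem_range, Finset.mem_univ, true_and]
    constructor
    · rintro ⟨t, _, rfl⟩; exact ⟨(t : ZMod v), rfl⟩
    · rintro ⟨t, rfl⟩
      exact ⟨t.val, t.val_lt, by rw [ZMod.natCast_val, ZMod.cast_id]⟩
  have hinj' : Function.Injective (fun t : ZMod v => X.image (· + t)) :=
    fun s t h => hinj s t h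
  refine ⟨⟨?_, ?_, ?_, ?_⟩, ?_⟩
  · rw [hAT, Finset.card_image_of_injective _ hinj', Finset.card_univ, ZMod.card]
  · intro b hb
    rw [hAT] at hb
    obtain ⟨t, -, rfl⟩ := Finset.mem_image.mp hb
    rw [Finset.card_image_of_injective _ (add_left_injective t), hcard]
  · intro b₁ hb₁ b₂ hb₂ x y hxy hx1 hy1 hx2 hy2
    rw [hAT] at hb₁ hb₂
    obtain ⟨s, -, rfl⟩ := Finset.mem_image.mp hb₁
    obtain ⟨t, -, rfl⟩ := Finset.mem_image.mp hb₂
    obtain ⟨a, ha, hax⟩ := Finset.mem_image.mp hx1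
    obtain ⟨b, hb, hby⟩ := Finset.mem_image.mp hy1
    obtain ⟨c, hc, hcx⟩ := Finset.mem_image.mp hx2
    obtain ⟨d, hd, hdy⟩ := Finset.mem_image.mp hy2
    have hdiff : a - b = c - d := by linear_combination hax - hby - hcx + hdy
    rcases hgol a ha b hb c hc d hd hdiff with ⟨h1, _⟩ | ⟨h1, _⟩
    · exact absurd (by rw [← hax, ← hby, h1]) hxy
    · have hst : s = t := by
        have : a + s = a + t := by rw [hax, h1]; exact hcx.symm
        exact add_left_cancel this
      rw [hst]
  · intro x
    have hset : ((Finset.univ : Finset (ZMod v)).filter (fun t => x ∈ X.image (· + t)))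
        = X.image (fun a => x - a) := by
      ext t
      simp only [Finset.mem_filter, Finset.mem_univ, true_and, Finset.mem_image]
      constructor
      · rintro ⟨a, ha, hat⟩
        exact ⟨a, ha, by linear_combination -hat⟩
      · rintro ⟨a, ha, rfl⟩
        exact ⟨a, ha, by ring⟩
    have key : (AllTranslates v X).filter (fun b => x ∈ b)
        = (((Finset.univ : Finset (ZMod v)).filter (fun t => x ∈ X.image (· + t))).image
            (fun t : ZMod v => X.image (· + t))) := by
      rw [hAT, Finset.filter_image]
    rw [key, Finset.card_image_of_injective _ hinj', hset,
      Finset.card_image_of_injective _ (fun a b h => by linear_combination -h), hcard]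
  · intro b hb
    rw [hAT] at hb ⊢
    obtain ⟨t, -, rfl⟩ := Finset.mem_image.mp hb
    refine Finset.mem_image.mpr ⟨t + 1, Finset.mem_univ _, ?_⟩
    rw [Finset.image_image]
    apply Finset.image_congr
    intro a _
    simp [add_assoc]
end

section
/- Let k divide v, 2 ≤ k ≤ v. If a (v,k)-resolvable modular Golomb ruler exists, then a cyclic resolvable (v,k)-configuration exists: the v translates of a (v,k)-RMGR X form its block set, and the k parallel classes are P_i = {X + kj + i mod v : 0 ≤ j ≤ v/k − 1} for 0 ≤ i ≤ k−1. -/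
/-- If a (v,k)-resolvable modular Golomb ruler exists (k ∣ v, 2 ≤ k ≤ v), then a
cyclic resolvable (v,k)-configuration exists: the block set consists of the v
translates of the RMGR X, and the k parallel classes are
P_i = {X + kj + i : 0 ≤ j ≤ v/k − 1} for 0 ≤ i ≤ k−1. -/
theorem cyclic_resolvable_config_from_RMGR (v k : ℕ) (hk : 2 ≤ k) (hkv : k ≤ v)
    (hdvd : k ∣ v) (X : Finset (ZMod v)) (hX : IsRMGR v k X) :
    ∃ (B : Finset (Finset (ZMod v))) (R : Finset (Finset (Finset (ZMod v)))),
      B = AllTranslates v X ∧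
      R = (Finset.range k).image (fun i =>
            (Finset.range (v / k)).image (fun j =>
              X.image (· + ((k * j + i : ℕ) : ZMod v)))) ∧
      IsConfig v k B ∧ IsResolution v k B R ∧ CyclicResolution v R := by
  classical
  obtain ⟨⟨hcard, hG⟩, hres⟩ := hX
  haveI : NeZero v := ⟨by omega⟩
  haveI : NeZero k := ⟨by omega⟩
  set φ : ZMod v →+* ZMod k := ZMod.castHom hdvd (ZMod k) with hφdef
  set T : ZMod v → Finset (ZMod v) := fun t => X.image (· + t) with hTdef
  have memT : ∀ (z t : ZMod v), z ∈ T t ↔ z - t ∈ X := by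
    intro z t
    simp only [hTdef, Finset.mem_image]
    constructor
    · rintro ⟨a, ha, rfl⟩; simpa using ha
    · intro h; exact ⟨z - t, h, by ring⟩
  have Tinj : Function.Injective T := by
    intro t s hts
    obtain ⟨x, hx, y, hy, hxy⟩ := Finset.one_lt_card.mp (by omega : 1 < X.card)
    have hx' : x + t ∈ T s := by
      rw [← hts]; exact Finset.mem_image_of_mem _ hx
    have hy' : y + t ∈ T s := by
      rw [← hts]; exact Finset.mem_image_of_mem _ hy
    rw [memT] at hx' hy'
    have := hG x hx (x + t - s) hx' y hy (y + t - s) hy' (by ring)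
    rcases this with ⟨h1, _⟩ | ⟨h1, _⟩
    · have hts2 : t = s := by linear_combination -h1
      rw [hts2]
    · exact absurd h1 hxy
  have cardT : ∀ t, (T t).card = k := by
    intro t
    rw [hTdef]
    rw [Finset.card_image_of_injective _ (add_left_injective t), hcard]
  have φval : ∀ x : ZMod v, ((x.val : ℕ) : ZMod k) = φ x := by
    intro x; rw [hφdef, ZMod.castHom_apply, ZMod.natCast_val]
  have valk : ∀ r : ZMod k, ((r.val : ℕ) : ZMod k) = r := by
    intro r; rw [ZMod.natCast_val, ZMod.cast_id]
  have valv : ∀ t : ZMod v, ((t.val : ℕ) : ZMod v) = t := by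
    intro t; rw [ZMod.natCast_val, ZMod.cast_id]
  have hsurj : ∀ r : ZMod k, ∃ a ∈ X, φ a = r := by
    intro r
    obtain ⟨x, hx, h⟩ := hres r
    exact ⟨x, hx, by rw [← φval]; exact h⟩
  have hinj : Set.InjOn φ X := by
    apply Finset.injOn_of_card_image_eq
    have himg : X.image (fun x => φ x) = Finset.univ := by
      ext r
      simp only [Finset.mem_image, Finset.mem_univ, iff_true]
      exact hsurj r
    rw [himg, Finset.card_univ, ZMod.card, hcard]
  have hBeq : AllTranslates v X = Finset.univ.image T := by
    unfold AllTranslates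
    have : (fun t : ℕ => X.image (· + (t : ZMod v))) = T ∘ (Nat.cast : ℕ → ZMod v) := rfl
    rw [this, ← Finset.image_image]
    congr 1
    ext t
    simp only [Finset.mem_image, Finset.mem_range, Finset.mem_univ, iff_true]
    exact ⟨t.val, t.val_lt, valv t⟩
  set Q : ZMod k → Finset (Finset (ZMod v)) :=
    fun i => (Finset.univ.filter (fun t => φ t = i)).image T with hQdef
  have Qmem : ∀ (i : ZMod k) (b : Finset (ZMod v)),
      b ∈ Q i ↔ ∃ t, φ t = i ∧ T t = b := by
    intro i b
    simp only [hQdef, Finset.mem_image, Finset.mem_filter, Finset.mem_univ, true_and]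
  have PQ : ∀ i ∈ Finset.range k,
      (Finset.range (v / k)).image (fun j => X.image (· + ((k * j + i : ℕ) : ZMod v)))
        = Q ((i : ℕ) : ZMod k) := by
    intro i hi
    rw [Finset.mem_range] at hi
    ext b
    rw [Qmem]
    simp only [Finset.mem_image, Finset.mem_range]
    constructor
    · rintro ⟨j, hj, rfl⟩
      refine ⟨((k * j + i : ℕ) : ZMod v), ?_, rfl⟩
      rw [map_natCast]
      push_cast
      simp [ZMod.natCast_self]
    · rintro ⟨t, ht, rfl⟩
      have hmod : t.val % k = i := by
        have h1 : ((t.val : ℕ) : ZMod k) = ((i : ℕ) : ZMod k) := by rw [φval]; exact ht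
        have h2 := (ZMod.natCast_eq_natCast_iff _ _ _).mp h1
        have h3 : t.val % k = i % k := h2
        rwa [Nat.mod_eq_of_lt hi] at h3
      refine ⟨t.val / k, Nat.div_lt_div_of_lt_of_dvd hdvd t.val_lt, ?_⟩
      have hval : k * (t.val / k) + i = t.val := by
        conv_rhs => rw [← Nat.div_add_mod t.val k]
        rw [hmod]
      rw [hval, valv]
  have hR' : (Finset.range k).image (fun i =>
        (Finset.range (v / k)).image (fun j => X.image (· + ((k * j + i : ℕ) : ZMod v))))
      = (Finset.range k).image (fun i => Q ((i : ℕ) : ZMod k)) :=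
    Finset.image_congr PQ
  have QinR : ∀ i : ZMod k, Q i ∈ (Finset.range k).image (fun i => Q ((i : ℕ) : ZMod k)) := by
    intro i
    refine Finset.mem_image.mpr ⟨i.val, Finset.mem_range.mpr i.val_lt, ?_⟩
    rw [valk]
  have natcast_injk : ∀ i ∈ Finset.range k, ∀ i' ∈ Finset.range k,
      ((i : ℕ) : ZMod k) = ((i' : ℕ) : ZMod k) → i = i' := by
    intro i hi i' hi' h
    rw [Finset.mem_range] at hi hi'
    have h2 : i % k = i' % k := (ZMod.natCast_eq_natCast_iff _ _ _).mp h
    rwa [Nat.mod_eq_of_lt hi, Nat.mod_eq_of_lt hi'] at h2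
  refine ⟨_, _, rfl, rfl, ⟨?_, ?_, ?_, ?_⟩, ?_, ?_⟩
  · -- card B = v
    rw [hBeq, Finset.card_image_of_injective _ Tinj, Finset.card_univ, ZMod.card]
  · -- block sizes
    intro b hb
    rw [hBeq] at hb
    obtain ⟨t, _, rfl⟩ := Finset.mem_image.mp hb
    exact cardT t
  · -- no pair in two blocks
    intro b₁ hb₁ b₂ hb₂ x y hxy hx1 hy1 hx2 hy2
    rw [hBeq] at hb₁ hb₂
    obtain ⟨t, _, rfl⟩ := Finset.mem_image.mp hb₁
    obtain ⟨s, _, rfl⟩ := Finset.mem_image.mp hb₂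
    rw [memT] at hx1 hy1 hx2 hy2
    have := hG (x - t) hx1 (y - t) hy1 (x - s) hx2 (y - s) hy2 (by ring)
    rcases this with ⟨h1, _⟩ | ⟨h1, _⟩
    · exact absurd (by linear_combination h1 : x = y) hxy
    · have : t = s := by linear_combination -h1
      rw [this]
  · -- degrees
    intro x
    rw [hBeq]
    have h1 : (Finset.univ.image T).filter (fun b => x ∈ b)
        = (Finset.univ.filter (fun t => x ∈ T t)).image T := by
      ext b
      simp only [Finset.mem_filter, Finset.mem_image, Finset.mem_univ, true_and]
      constructor
      · rintro ⟨⟨t, rfl⟩, hx⟩; exact ⟨t, hx, rfl⟩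
      · rintro ⟨t, hx, rfl⟩; exact ⟨⟨t, rfl⟩, hx⟩
    rw [h1, Finset.card_image_of_injective _ Tinj]
    have h2 : Finset.univ.filter (fun t => x ∈ T t) = X.image (fun a => x - a) := by
      ext t
      simp only [Finset.mem_filter, Finset.mem_univ, true_and, Finset.mem_image, memT]
      constructor
      · intro h; exact ⟨x - t, h, by ring⟩
      · rintro ⟨a, ha, rfl⟩; simpa using ha
    rw [h2, Finset.card_image_of_injective _ sub_right_injective, hcard]
  · -- IsResolution
    rw [hR']
    refine ⟨?_, ?_, ?_⟩
    · -- card R = k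
      rw [Finset.card_image_of_injOn, Finset.card_range]
      intro i hi i' hi' h
      simp only [Finset.coe_range, Set.mem_Iio] at hi hi'
      apply natcast_injk i (Finset.mem_range.mpr hi) i' (Finset.mem_range.mpr hi')
      have hmem : T ((i : ℕ) : ZMod v) ∈ Q ((i : ℕ) : ZMod k) := by
        rw [Qmem]
        exact ⟨((i : ℕ) : ZMod v), by rw [map_natCast], rfl⟩
      have h2 : Q ((i : ℕ) : ZMod k) = Q ((i' : ℕ) : ZMod k) := h
      rw [h2, Qmem] at hmem
      obtain ⟨t, ht, hTt⟩ := hmem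
      have := Tinj hTt
      rw [← ht, this, map_natCast]
    · -- parallel classes
      intro P hP
      obtain ⟨i₀, _, rfl⟩ := Finset.mem_image.mp hP
      set i : ZMod k := ((i₀ : ℕ) : ZMod k)
      constructor
      · -- subset of B
        intro b hb
        rw [Qmem] at hb
        obtain ⟨t, _, rfl⟩ := hb
        rw [hBeq]
        exact Finset.mem_image_of_mem T (Finset.mem_univ t)
      constructor
      · -- coverage
        intro x
        obtain ⟨a, haX, ha⟩ := hsurj (φ x - i)
        refine ⟨T (x - a), ?_, ?_⟩
        · rw [Qmem]
          exact ⟨x - a, by rw [map_sub, ha]; ring, rfl⟩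
        · rw [memT]; simpa using haX
      · -- disjointness
        intro b₁ hb₁ b₂ hb₂ hne
        rw [Qmem] at hb₁ hb₂
        obtain ⟨t₁, ht₁, rfl⟩ := hb₁
        obtain ⟨t₂, ht₂, rfl⟩ := hb₂
        rw [Finset.disjoint_left]
        intro x hx1 hx2
        rw [memT] at hx1 hx2
        have hφeq : φ (x - t₁) = φ (x - t₂) := by
          rw [map_sub, map_sub, ht₁, ht₂]
        have := hinj hx1 hx2 hφeq
        have : t₁ = t₂ := by
          have h := this; linear_combination -h
        exact hne (by rw [this])
    · -- exactly one class per block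
      intro b hb
      rw [hBeq] at hb
      obtain ⟨t, _, rfl⟩ := Finset.mem_image.mp hb
      refine ⟨Q (φ t), ⟨QinR (φ t), ?_⟩, ?_⟩
      · rw [Qmem]; exact ⟨t, rfl, rfl⟩
      · rintro P' ⟨hP', hbP'⟩
        obtain ⟨i', _, rfl⟩ := Finset.mem_image.mp hP'
        rw [Qmem] at hbP'
        obtain ⟨s, hs, hTs⟩ := hbP'
        rw [Tinj hTs] at hs
        rw [hs]
  · -- CyclicResolution
    have shiftT : ∀ t, (T t).image (· + 1) = T (t + 1) := by
      intro t
      rw [hTdef]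
      simp only [Finset.image_image]
      congr 1
      funext a
      simp [add_assoc]
    have shiftQ : ∀ i, (Q i).image (fun b => b.image (· + 1)) = Q (i + 1) := by
      intro i
      ext b
      rw [Qmem]
      simp only [Finset.mem_image]
      constructor
      · rintro ⟨b', hb', rfl⟩
        rw [Qmem] at hb'
        obtain ⟨t, ht, rfl⟩ := hb'
        exact ⟨t + 1, by rw [map_add, ht, map_one], (shiftT t).symm⟩
      · rintro ⟨t, ht, rfl⟩
        refine ⟨T (t - 1), ?_, ?_⟩
        · rw [Qmem]
          refine ⟨t - 1, ?_, rfl⟩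
          rw [map_sub, ht, map_one]
          ring
        · rw [shiftT, sub_add_cancel]
    intro P hP
    rw [hR'] at hP ⊢
    obtain ⟨i₀, _, rfl⟩ := Finset.mem_image.mp hP
    rw [shiftQ]
    exact QinR _
end

section
/- Let 2 ≤ k ≤ v. The block set ℬ of any cyclic (v,k)-configuration is necessarily the set of all v translates X+t (t ∈ Z_v) of a single block X ∈ ℬ, and this block X is a (v,k)-modular Golomb ruler. -/
/-!
A block `X` with a nonzero stabilizing translation `t` meets each of its translates only if they
coincide, since a common point `y` gives the common pair `y, y + t`. Hence such a block through `0`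
is its own stabilizer subgroup. A finite cyclic group has at most one subgroup of each order, so two
blocks through `0` cannot both have nontrivial stabilizers, and some block `X` has a trivial one.
Its `v` translates are then distinct, so they exhaust `B`; and `a - b = c - d` puts the pair `c, d`
in both `X` and `X + (c - a)`, forcing `c = a`.
-/

open Pointwise

def IsPartialLinearSpace {α : Type*} (B : Finset (Finset α)) : Prop :=
  ∀ b₁ ∈ B, ∀ b₂ ∈ B, ∀ x y : α,
    x ≠ y → x ∈ b₁ → y ∈ b₁ → x ∈ b₂ → y ∈ b₂ → b₁ = b₂

theorem AddSubgroup.eq_of_card_eq_of_isAddCyclic {G : Type*} [AddCommGroup G] [IsAddCyclic G]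
    [Finite G] {H K : AddSubgroup G} (h : Nat.card H = Nat.card K) : H = K := by
  have eq_ker : ∀ L : AddSubgroup G, L = (nsmulAddMonoidHom (Nat.card L) : G →+ G).ker := by
    intro L
    refine AddSubgroup.eq_of_le_of_card_ge (fun x hx => ?_) ?_
    · exact addOrderOf_dvd_iff_nsmul_eq_zero.mp (AddSubgroup.addOrderOf_dvd_natCard L hx)
    · rw [IsAddCyclic.card_nsmulAddMonoidHom_ker,
        Nat.gcd_eq_right (AddSubgroup.card_addSubgroup_dvd_card L)]
  rw [eq_ker H, eq_ker K, h]

section Translation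

variable {G : Type*} [AddCommGroup G] [DecidableEq G] {B : Finset (Finset G)}

theorem Finset.image_add_right_eq_vadd (X : Finset G) (t : G) : X.image (· + t) = t +ᵥ X := by
  simp only [Finset.vadd_finset_def, vadd_eq_add, add_comm]

theorem vadd_eq_self_of_mem_of_mem_vadd (hlin : IsPartialLinearSpace B)
    (hinv : ∀ t : G, ∀ b ∈ B, t +ᵥ b ∈ B) {X : Finset G} (hX : X ∈ B) {t : G}
    (ht : t ∈ AddAction.stabilizer G X) (ht0 : t ≠ 0) {s y : G} (hy : y ∈ X)
    (hys : y ∈ s +ᵥ X) : s +ᵥ X = X := by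
  rw [AddAction.mem_stabilizer_iff] at ht
  have ht' : t +ᵥ (s +ᵥ X) = s +ᵥ X := by rw [vadd_comm, ht]
  have mem_of_mem : ∀ {Y : Finset G}, t +ᵥ Y = Y → y ∈ Y → t + y ∈ Y := fun hY hyY => by
    rw [← hY]; exact Finset.vadd_mem_vadd_finset hyY
  refine hlin _ (hinv s X hX) X hX y (t + y) (by simpa using ht0) hys
    (mem_of_mem ht' hys) hy (mem_of_mem ht hy)

theorem coe_eq_stabilizer_of_zero_mem (hlin : IsPartialLinearSpace B)
    (hinv : ∀ t : G, ∀ b ∈ B, t +ᵥ b ∈ B) {X : Finset G} (hX : X ∈ B)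
    (hstab : AddAction.stabilizer G X ≠ ⊥) (h0 : 0 ∈ X) :
    (X : Set G) = AddAction.stabilizer G X := by
  obtain ⟨t, ht, ht0⟩ := (AddSubgroup.bot_or_exists_ne_zero _).resolve_left hstab
  ext s
  rw [Finset.mem_coe, SetLike.mem_coe, AddAction.mem_stabilizer_iff]
  constructor
  · intro hs
    exact vadd_eq_self_of_mem_of_mem_vadd hlin hinv hX ht ht0 hs
      (by simpa using Finset.vadd_mem_vadd_finset (a := s) h0)
  · intro hs
    rw [← hs]
    simpa using Finset.vadd_mem_vadd_finset (a := s) h0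

theorem exists_stabilizer_eq_bot [IsAddCyclic G] [Finite G] (hlin : IsPartialLinearSpace B)
    (hinv : ∀ t : G, ∀ b ∈ B, t +ᵥ b ∈ B) {k : ℕ} (hsize : ∀ b ∈ B, b.card = k)
    (h0 : 1 < (B.filter (0 ∈ ·)).card) : ∃ X ∈ B, AddAction.stabilizer G X = ⊥ := by
  by_contra! hstab
  obtain ⟨Y, hY, Z, hZ, hYZ⟩ := Finset.one_lt_card.mp h0
  rw [Finset.mem_filter] at hY hZ
  have hYs := coe_eq_stabilizer_of_zero_mem hlin hinv hY.1 (hstab Y hY.1) hY.2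
  have hZs := coe_eq_stabilizer_of_zero_mem hlin hinv hZ.1 (hstab Z hZ.1) hZ.2
  have hcard : Nat.card (AddAction.stabilizer G Y) = Nat.card (AddAction.stabilizer G Z) := by
    rw [← SetLike.coe_sort_coe, ← hYs, ← SetLike.coe_sort_coe, ← hZs, Nat.card_coe_set_eq,
      Nat.card_coe_set_eq, Set.ncard_coe_finset, Set.ncard_coe_finset, hsize Y hY.1, hsize Z hZ.1]
  refine hYZ (Finset.coe_injective ?_)
  rw [hYs, hZs, AddSubgroup.eq_of_card_eq_of_isAddCyclic hcard]

theorem vadd_left_injective_of_stabilizer_eq_bot {X : Finset G}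
    (hstab : AddAction.stabilizer G X = ⊥) : Function.Injective fun t : G => t +ᵥ X := by
  intro s t hst
  have : -t + s ∈ AddAction.stabilizer G X := by
    rw [AddAction.mem_stabilizer_iff, add_vadd]
    simp only at hst
    rw [hst, neg_vadd_vadd]
  rw [hstab, AddSubgroup.mem_bot, neg_add_eq_zero] at this
  exact this.symm

theorem eq_and_eq_of_sub_eq_sub_of_stabilizer_eq_bot (hlin : IsPartialLinearSpace B)
    (hinv : ∀ t : G, ∀ b ∈ B, t +ᵥ b ∈ B) {X : Finset G} (hX : X ∈ B)
    (hstab : AddAction.stabilizer G X = ⊥) {a b c d : G} (ha : a ∈ X) (hb : b ∈ X)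
    (hc : c ∈ X) (hd : d ∈ X) (hab : a ≠ b) (h : a - b = c - d) : a = c ∧ b = d := by
  have hc' : c ∈ (c - a) +ᵥ X := by
    simpa using Finset.vadd_mem_vadd_finset (a := c - a) ha
  have hd' : d ∈ (c - a) +ᵥ X := by
    convert Finset.vadd_mem_vadd_finset (a := c - a) hb using 1
    rw [vadd_eq_add]; grind
  have hcd : c ≠ d := fun hcd => hab (sub_eq_zero.mp (by rw [h, hcd, sub_self]))
  have hfix := hlin _ (hinv _ X hX) X hX c d hcd hc' hd' hc hd
  have hca : c - a = 0 := by
    rw [← AddSubgroup.mem_bot, ← hstab, AddAction.mem_stabilizer_iff, hfix]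
  have hac : a = c := (sub_eq_zero.mp hca).symm
  exact ⟨hac, sub_right_injective (by rwa [hac] at h)⟩

end Translation

theorem CyclicBlocks.vadd_mem {v : ℕ} [NeZero v] {B : Finset (Finset (ZMod v))}
    (hcyc : CyclicBlocks v B) : ∀ t : ZMod v, ∀ b ∈ B, t +ᵥ b ∈ B := by
  intro t b hb
  obtain ⟨n, rfl⟩ := ZMod.natCast_zmod_surjective t
  induction n with
  | zero => simpa using hb
  | succ n ih =>
    have := hcyc _ ih
    rwa [Finset.image_add_right_eq_vadd, vadd_vadd, add_comm, ← Nat.cast_succ] at this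

theorem allTranslates_eq_image_univ (v : ℕ) [NeZero v] (X : Finset (ZMod v)) :
    AllTranslates v X = Finset.univ.image fun t : ZMod v => t +ᵥ X := by
  ext Y
  simp only [AllTranslates, Finset.image_add_right_eq_vadd, Finset.mem_image, Finset.mem_range,
    Finset.mem_univ, true_and]
  constructor
  · rintro ⟨n, -, rfl⟩
    exact ⟨n, rfl⟩
  · rintro ⟨t, rfl⟩
    exact ⟨t.val, ZMod.val_lt t, by rw [ZMod.natCast_zmod_val]⟩

theorem isMGR_of_stabilizer_eq_bot {v k : ℕ} {B : Finset (Finset (ZMod v))}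
    (hlin : IsPartialLinearSpace B) (hinv : ∀ t : ZMod v, ∀ b ∈ B, t +ᵥ b ∈ B)
    {X : Finset (ZMod v)} (hX : X ∈ B) (hXk : X.card = k)
    (hstab : AddAction.stabilizer (ZMod v) X = ⊥) : IsMGR v k X := by
  refine ⟨hXk, fun a ha b hb c hc d hd h => ?_⟩
  by_cases hab : a = b
  · exact Or.inl ⟨hab, sub_eq_zero.mp (by rw [← h, hab, sub_self])⟩
  · exact Or.inr
      (eq_and_eq_of_sub_eq_sub_of_stabilizer_eq_bot hlin hinv hX hstab ha hb hc hd hab h)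

theorem eq_allTranslates_of_stabilizer_eq_bot {v : ℕ} [NeZero v] {B : Finset (Finset (ZMod v))}
    (hinv : ∀ t : ZMod v, ∀ b ∈ B, t +ᵥ b ∈ B) (hcard : B.card = v) {X : Finset (ZMod v)}
    (hX : X ∈ B) (hstab : AddAction.stabilizer (ZMod v) X = ⊥) : B = AllTranslates v X := by
  have hsub : AllTranslates v X ⊆ B := by
    rw [allTranslates_eq_image_univ]
    intro Y hY
    obtain ⟨t, -, rfl⟩ := Finset.mem_image.mp hY
    exact hinv t X hX
  refine (Finset.eq_of_subset_of_card_le hsub ?_).symm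
  rw [allTranslates_eq_image_univ,
    Finset.card_image_of_injective _ (vadd_left_injective_of_stabilizer_eq_bot hstab),
    Finset.card_univ, ZMod.card, hcard]

theorem cyclic_config_gives_MGR_general (v k : ℕ) (hk : 2 ≤ k)
    (B : Finset (Finset (ZMod v))) (hB : IsConfig v k B)
    (hcyc : CyclicBlocks v B) :
    ∃ X ∈ B, IsMGR v k X ∧ B = AllTranslates v X := by
  obtain ⟨hcard, hsize, hlin, hdeg⟩ := hB
  have : NeZero v := ⟨by have := B.card_filter_le (0 ∈ ·); rw [hdeg] at this; omega⟩
  have hinv := hcyc.vadd_mem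
  obtain ⟨X, hX, hstab⟩ := exists_stabilizer_eq_bot hlin hinv hsize (by rw [hdeg]; omega)
  exact ⟨X, hX, isMGR_of_stabilizer_eq_bot hlin hinv hX (hsize X hX) hstab,
    eq_allTranslates_of_stabilizer_eq_bot hinv hcard hX hstab⟩

/-- The block set of any cyclic (v,k)-configuration (2 ≤ k ≤ v) is the set of all v
translates of a single block X, and X is a (v,k)-modular Golomb ruler. -/
theorem cyclic_config_gives_MGR (v k : ℕ) (hk : 2 ≤ k) (hkv : k ≤ v)
    (B : Finset (Finset (ZMod v))) (hB : IsConfig v k B)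
    (hcyc : CyclicBlocks v B) :
    ∃ X ∈ B, IsMGR v k X ∧ B = AllTranslates v X :=
  cyclic_config_gives_MGR_general v k hk B hB hcyc
end

section
/- Suppose there exists a resolvable Golomb ruler RGR(k,L) with k ≥ 2. Then for every positive integer w with kw ≥ 2L+1, there exists a cyclic resolvable (kw,k)-configuration. -/
/-- A Golomb ruler: a finite set of integers all of whose differences of
ordered pairs of distinct elements are pairwise distinct. -/
def IsGolombRuler (X : Finset ℤ) : Prop :=
  ∀ a ∈ X, ∀ b ∈ X, ∀ c ∈ X, ∀ d ∈ X,
    a - b = c - d → (a = b ∧ c = d) ∨ (a = c ∧ b = d)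

/-- `X` has length `L`: the difference between its maximum and minimum elements is `L`. -/
def HasLength (X : Finset ℤ) (L : ℕ) : Prop :=
  ∃ m ∈ X, ∃ M ∈ X, (∀ x ∈ X, m ≤ x ∧ x ≤ M) ∧ M - m = (L : ℤ)

/-- The elements of `X` cover all `k` residue classes modulo `k`. -/
def CoversResidues (k : ℕ) (X : Finset ℤ) : Prop :=
  ∀ r : ZMod k, ∃ x ∈ X, (x : ZMod k) = r

/-- A resolvable Golomb ruler RGR(k,L). -/
def IsRGR (k L : ℕ) (X : Finset ℤ) : Prop :=
  X.card = k ∧ IsGolombRuler X ∧ HasLength X L ∧ CoversResidues k X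

/-- A cyclic resolvable symmetric (v,k)-configuration exists. -/
def ExistsCyclicResolvableConfig (v k : ℕ) : Prop :=
  ∃ (B : Finset (Finset (ZMod v))) (R : Finset (Finset (Finset (ZMod v)))),
    IsConfig v k B ∧ IsResolution v k B R ∧ CyclicResolution v R

/-!
Reduce the ruler modulo `v = k w`. Since all its differences have absolute value at most `L` and
`2 L < v`, distinct differences stay distinct, so the ruler becomes a Sidon set `S` of size `k` in
`ZMod v`; its `v` translates `t + S` then form a cyclic `(v, k)`-configuration. As `S` meets every
residue class modulo `k` exactly once, the translates `t + S` with `t` in a fixed class modulo `k`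
partition `ZMod v`, and these `k` classes form a resolution which the shift `x ↦ x + 1` permutes.
-/

open Finset Pointwise

/-- `IsGolombRuler` for finite subsets of an arbitrary abelian group. -/
def IsSidon {G : Type*} [AddCommGroup G] (S : Finset G) : Prop :=
  ∀ a ∈ S, ∀ b ∈ S, ∀ c ∈ S, ∀ d ∈ S, a - b = c - d → (a = b ∧ c = d) ∨ (a = c ∧ b = d)

section Translates

variable {G H F : Type*} [AddCommGroup G] [DecidableEq G] {S : Finset G}

theorem IsSidon.eq_of_pair_mem_vadd (hS : IsSidon S) {t t' x y : G} (hxy : x ≠ y)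
    (hx : x ∈ t +ᵥ S) (hy : y ∈ t +ᵥ S) (hx' : x ∈ t' +ᵥ S) (hy' : y ∈ t' +ᵥ S) : t = t' := by
  obtain ⟨a, ha, rfl⟩ := mem_vadd_finset.mp hx
  obtain ⟨b, hb, rfl⟩ := mem_vadd_finset.mp hy
  obtain ⟨c, hc, hca⟩ := mem_vadd_finset.mp hx'
  obtain ⟨d, hd, hdb⟩ := mem_vadd_finset.mp hy'
  simp only [vadd_eq_add] at hxy hca hdb ⊢
  have hdiff : a - b = c - d := by
    rw [← add_sub_add_left_eq_sub a b t, ← hca, ← hdb, add_sub_add_left_eq_sub]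
  rcases hS a ha b hb c hc d hd hdiff with ⟨rfl, -⟩ | ⟨rfl, -⟩
  · exact absurd rfl hxy
  · exact (add_right_cancel hca).symm

theorem IsSidon.vadd_injective (hS : IsSidon S) (hne : S.Nonempty) :
    Function.Injective fun t : G => t +ᵥ S := by
  intro t t' (h : t +ᵥ S = t' +ᵥ S)
  obtain ⟨a, ha⟩ := hne
  have hshift : ∀ s ∈ S, s + (t - t') ∈ S := by
    intro s hs
    have : t +ᵥ s ∈ t' +ᵥ S := h ▸ vadd_mem_vadd_finset hs
    obtain ⟨s', hs', hs's⟩ := mem_vadd_finset.mp this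
    convert hs' using 1
    simp only [vadd_eq_add] at hs's
    rw [← add_sub_cancel_left t' s', hs's]
    abel
  -- `a`, `a + d`, `a + 2d` would repeat the difference `d = t - t'`
  have h₁ := hshift a ha
  have h₂ := hshift _ h₁
  rcases hS _ h₁ a ha _ h₂ _ h₁ (by abel) with ⟨h, -⟩ | ⟨h, -⟩
  · exact sub_eq_zero.mp (add_eq_left.mp h)
  · exact sub_eq_zero.mp (left_eq_add.mp h)

theorem card_filter_mem_vadd_finset [Fintype G] (S : Finset G) (x : G) :
    #({t | x ∈ t +ᵥ S} : Finset G) = #S := by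
  have : ({t | x ∈ t +ᵥ S} : Finset G) = S.image (x - ·) := by
    ext t
    simp only [mem_filter, mem_univ, true_and, mem_image, mem_vadd_finset, vadd_eq_add]
    constructor <;> rintro ⟨s, hs, rfl⟩ <;> exact ⟨s, hs, by abel⟩
  rw [this, card_image_of_injective _ sub_right_injective]

theorem image_add_right_vadd_finset (t g : G) : (t +ᵥ S).image (· + g) = (t + g) +ᵥ S := by
  simp only [vadd_finset_def, image_image, vadd_eq_add]
  exact image_congr fun s _ => add_right_comm t s g

section Fibers

variable [FunLike F G H] {π : F}

section Hom

variable [AddCommGroup H] [AddMonoidHomClass F G H]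

theorem eq_of_mem_vadd_finset_of_map_eq (hπ : Set.InjOn π S) {t t' x : G} (h : π t = π t')
    (hx : x ∈ t +ᵥ S) (hx' : x ∈ t' +ᵥ S) : t = t' := by
  obtain ⟨a, ha, rfl⟩ := mem_vadd_finset.mp hx
  obtain ⟨b, hb, hba⟩ := mem_vadd_finset.mp hx'
  simp only [vadd_eq_add] at hba
  have hπab : π b = π a := by
    have := congrArg π hba
    rwa [map_add, map_add, h, add_right_inj] at this
  rw [hπ hb ha hπab] at hba
  exact (add_right_cancel hba).symm

theorem exists_map_eq_mem_vadd_finset (hπ : ∀ h : H, ∃ s ∈ S, π s = h) (j : H) (x : G) :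
    ∃ t, π t = j ∧ x ∈ t +ᵥ S := by
  obtain ⟨s, hs, hπs⟩ := hπ (π x - j)
  refine ⟨x - s, by rw [map_sub, hπs, sub_sub_cancel], mem_vadd_finset.mpr ⟨s, hs, ?_⟩⟩
  simp only [vadd_eq_add, sub_add_cancel]

end Hom

variable [Fintype G] [DecidableEq H]

def fiberTranslates (π : F) (S : Finset G) (j : H) : Finset (Finset G) :=
  ({t | π t = j} : Finset G).image (· +ᵥ S)

theorem mem_fiberTranslates {j : H} {b : Finset G} :
    b ∈ fiberTranslates π S j ↔ ∃ t, π t = j ∧ t +ᵥ S = b := by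
  simp [fiberTranslates]

theorem image_image_add_fiberTranslates [AddCommGroup H] [AddMonoidHomClass F G H] (g : G)
    (j : H) :
    (fiberTranslates π S j).image (·.image (· + g)) = fiberTranslates π S (j + π g) := by
  ext b
  simp only [mem_image, mem_fiberTranslates]
  constructor
  · rintro ⟨_, ⟨t, rfl, rfl⟩, rfl⟩
    exact ⟨t + g, map_add π t g, (image_add_right_vadd_finset t g).symm⟩
  · rintro ⟨t, ht, rfl⟩
    refine ⟨(t - g) +ᵥ S, ⟨t - g, by rw [map_sub, ht, add_sub_cancel_right], rfl⟩, ?_⟩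
    rw [image_add_right_vadd_finset, sub_add_cancel]

end Fibers

end Translates

section Configuration

variable {v : ℕ} [NeZero v] {S : Finset (ZMod v)}

theorem IsSidon.isConfig_translates (hS : IsSidon S) (hne : S.Nonempty) :
    IsConfig v #S (univ.image fun t : ZMod v => t +ᵥ S) := by
  refine ⟨?_, ?_, ?_, fun x => ?_⟩
  · rw [card_image_of_injective _ (hS.vadd_injective hne), card_univ, ZMod.card]
  · simp only [mem_image, mem_univ, true_and]
    rintro _ ⟨t, rfl⟩
    exact card_vadd_finset t S
  · simp only [mem_image, mem_univ, true_and]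
    rintro _ ⟨t, rfl⟩ _ ⟨t', rfl⟩ x y hxy hx hy hx' hy'
    rw [hS.eq_of_pair_mem_vadd hxy hx hy hx' hy']
  · rw [filter_image, card_image_of_injective _ (hS.vadd_injective hne)]
    exact card_filter_mem_vadd_finset S x

variable {H F : Type*} [AddCommGroup H] [Fintype H] [DecidableEq H]
  [FunLike F (ZMod v) H] [AddMonoidHomClass F (ZMod v) H] {π : F}

theorem IsSidon.isResolution_fiberTranslates (hS : IsSidon S) (hinj : Set.InjOn π S)
    (hsurj : ∀ h : H, ∃ s ∈ S, π s = h) :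
    IsResolution v (Fintype.card H) (univ.image fun t : ZMod v => t +ᵥ S)
      (univ.image (fiberTranslates π S)) := by
  have htrans := hS.vadd_injective (let ⟨s, hs, _⟩ := hsurj 0; ⟨s, hs⟩)
  have hclass : ∀ t j, t +ᵥ S ∈ fiberTranslates π S j → π t = j := by
    intro t j ht
    obtain ⟨t', rfl, ht'⟩ := mem_fiberTranslates.mp ht
    rw [htrans ht']
  have hclass_inj : Function.Injective (fiberTranslates π S) := by
    intro j j' h
    obtain ⟨t, rfl, -⟩ := exists_map_eq_mem_vadd_finset hsurj j 0
    exact hclass t _ (h ▸ mem_fiberTranslates.mpr ⟨t, rfl, rfl⟩)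
  refine ⟨by rw [card_image_of_injective _ hclass_inj, card_univ], ?_, ?_⟩
  · simp only [mem_image, mem_univ, true_and]
    rintro _ ⟨j, rfl⟩
    refine ⟨fun b hb => ?_, fun x => ?_, fun b₁ hb₁ b₂ hb₂ hne => ?_⟩
    · obtain ⟨t, -, rfl⟩ := mem_fiberTranslates.mp hb
      exact mem_image_of_mem _ (mem_univ t)
    · obtain ⟨t, ht, hx⟩ := exists_map_eq_mem_vadd_finset hsurj j x
      exact ⟨t +ᵥ S, mem_fiberTranslates.mpr ⟨t, ht, rfl⟩, hx⟩
    · obtain ⟨t, ht, rfl⟩ := mem_fiberTranslates.mp hb₁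
      obtain ⟨t', ht', rfl⟩ := mem_fiberTranslates.mp hb₂
      refine disjoint_left.mpr fun x hx hx' => hne ?_
      rw [eq_of_mem_vadd_finset_of_map_eq hinj (ht.trans ht'.symm) hx hx']
  · simp only [mem_image, mem_univ, true_and]
    rintro _ ⟨t, rfl⟩
    refine ⟨fiberTranslates π S (π t), ⟨⟨π t, rfl⟩, mem_fiberTranslates.mpr ⟨t, rfl, rfl⟩⟩, ?_⟩
    rintro _ ⟨⟨j, rfl⟩, ht⟩
    rw [hclass t j ht]

theorem cyclicResolution_fiberTranslates :
    CyclicResolution v (univ.image (fiberTranslates π S)) := by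
  simp only [CyclicResolution, mem_image, mem_univ, true_and]
  rintro _ ⟨j, rfl⟩
  exact ⟨j + π 1, (image_image_add_fiberTranslates 1 j).symm⟩

theorem IsSidon.existsCyclicResolvableConfig {k : ℕ} [NeZero k] (hS : IsSidon S)
    (hkv : k ∣ v) (hcard : #S = k)
    (hres : ∀ r : ZMod k, ∃ s ∈ S, ZMod.castHom hkv (ZMod k) s = r) :
    ExistsCyclicResolvableConfig v k := by
  have himage : S.image (ZMod.castHom hkv (ZMod k)) = univ :=
    eq_univ_iff_forall.mpr fun r => mem_image.mpr (hres r)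
  have hinj : Set.InjOn (ZMod.castHom hkv (ZMod k)) S :=
    card_image_iff.mp (by rw [himage, card_univ, ZMod.card, hcard])
  have hne : S.Nonempty := let ⟨s, hs, _⟩ := hres 0; ⟨s, hs⟩
  refine ⟨univ.image fun t : ZMod v => t +ᵥ S,
    univ.image (fiberTranslates (ZMod.castHom hkv (ZMod k)) S),
    hcard ▸ hS.isConfig_translates hne, ?_, cyclicResolution_fiberTranslates⟩
  simpa only [ZMod.card] using hS.isResolution_fiberTranslates hinj hres

end Configuration

theorem HasLength.abs_sub_le {X : Finset ℤ} {L : ℕ} (h : HasLength X L) {a b : ℤ} (ha : a ∈ X)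
    (hb : b ∈ X) : |a - b| ≤ L := by
  obtain ⟨m, -, M, -, hmM, hlen⟩ := h
  obtain ⟨ha₁, ha₂⟩ := hmM a ha
  obtain ⟨hb₁, hb₂⟩ := hmM b hb
  rw [abs_le]
  constructor <;> linarith

theorem Int.eq_of_intCast_zmod_eq_of_abs_sub_lt {v : ℕ} {x y : ℤ} (h : (x : ZMod v) = y)
    (hxy : |x - y| < v) : x = y := by
  refine sub_eq_zero.mp (Int.eq_zero_of_abs_lt_dvd ?_ hxy)
  rw [← ZMod.intCast_zmod_eq_zero_iff_dvd, Int.cast_sub, h, sub_self]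

theorem HasLength.injOn_intCast {X : Finset ℤ} {L v : ℕ} (h : HasLength X L) (hv : L < v) :
    Set.InjOn (Int.cast : ℤ → ZMod v) X := fun a ha b hb hab =>
  Int.eq_of_intCast_zmod_eq_of_abs_sub_lt hab
    ((h.abs_sub_le ha hb).trans_lt (by exact_mod_cast hv))

theorem IsGolombRuler.isSidon_image_intCast {X : Finset ℤ} {L v : ℕ} (hX : IsGolombRuler X)
    (h : HasLength X L) (hv : 2 * L < v) : IsSidon (X.image (Int.cast : ℤ → ZMod v)) := by
  simp only [IsSidon, mem_image]
  rintro _ ⟨a, ha, rfl⟩ _ ⟨b, hb, rfl⟩ _ ⟨c, hc, rfl⟩ _ ⟨d, hd, rfl⟩ habcd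
  have hdiff : a - b = c - d := by
    refine Int.eq_of_intCast_zmod_eq_of_abs_sub_lt (by push_cast; exact habcd) ?_
    calc |a - b - (c - d)| ≤ |a - b| + |c - d| := abs_sub _ _
      _ ≤ L + L := add_le_add (h.abs_sub_le ha hb) (h.abs_sub_le hc hd)
      _ < v := by omega
  rcases hX a ha b hb c hc d hd hdiff with ⟨rfl, rfl⟩ | ⟨rfl, rfl⟩ <;> simp

theorem cyclic_resolvable_config_from_RGR_general (k L : ℕ)
    (h : ∃ X : Finset ℤ, IsRGR k L X)
    (w : ℕ) (hbound : 2 * L + 1 ≤ k * w) :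
    ExistsCyclicResolvableConfig (k * w) k := by
  obtain ⟨X, hcard, hX, hlen, hres⟩ := h
  have : NeZero (k * w) := ⟨by omega⟩
  have : NeZero k := ⟨by rintro rfl; omega⟩
  have hv : 2 * L < k * w := by omega
  have hS : #(X.image (Int.cast : ℤ → ZMod (k * w))) = k := by
    rw [card_image_of_injOn (hlen.injOn_intCast (by omega)), hcard]
  refine (hX.isSidon_image_intCast hlen hv).existsCyclicResolvableConfig
    (dvd_mul_right k w) hS fun r => ?_
  obtain ⟨x, hx, rfl⟩ := hres r
  exact ⟨x, mem_image_of_mem _ hx, map_intCast _ x⟩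

/-- If a resolvable Golomb ruler RGR(k,L) exists (k ≥ 2), then for every w ≥ 1 with
kw ≥ 2L + 1 there exists a cyclic resolvable (kw,k)-configuration. -/
theorem cyclic_resolvable_config_from_RGR (k L : ℕ) (hk : 2 ≤ k)
    (h : ∃ X : Finset ℤ, IsRGR k L X)
    (w : ℕ) (hw : 1 ≤ w) (hbound : 2 * L + 1 ≤ k * w) :
    ExistsCyclicResolvableConfig (k * w) k :=
  cyclic_resolvable_config_from_RGR_general k L h w hbound
end

section
/- For all integers k ≥ 3 and w ≥ k², there exists a cyclic resolvable (wk,k)-configuration. -/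
namespace CRCaux

/-- triangular numbers -/
def Tn (i : ℕ) : ℕ := i * (i + 1) / 2

lemma two_Tn (i : ℕ) : 2 * Tn i = i * (i + 1) :=
  Nat.mul_div_cancel' (Nat.even_mul_succ_self i).two_dvd

/-- the base-block elements -/
def fz (k w i : ℕ) : ZMod (w * k) := ((i + k * Tn i : ℕ) : ZMod (w * k))

def B0 (k w : ℕ) : Finset (ZMod (w * k)) := (Finset.range k).image (fz k w)

def blk (k w : ℕ) (t : ZMod (w * k)) : Finset (ZMod (w * k)) := (B0 k w).image (· + t)

def phi (k w : ℕ) : ZMod (w * k) →+* ZMod k := ZMod.castHom (dvd_mul_left k w) (ZMod k)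

def cls (k w : ℕ) [NeZero (w * k)] (c : ZMod k) :
    Finset (Finset (ZMod (w * k))) :=
  ((Finset.univ : Finset (ZMod (w * k))).filter (fun t => phi k w t = c)).image (blk k w)

lemma phi_fz (k w i : ℕ) : phi k w (fz k w i) = (i : ZMod k) := by
  show phi k w ((i + k * Tn i : ℕ) : ZMod (w * k)) = _
  rw [map_natCast]
  push_cast
  simp [ZMod.natCast_self]

lemma fz_inj (k w : ℕ) {i j : ℕ} (hi : i < k) (hj : j < k)
    (h : fz k w i = fz k w j) : i = j := by
  have h2 : (i : ZMod k) = (j : ZMod k) := by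
    rw [← phi_fz k w i, ← phi_fz k w j, h]
  rw [ZMod.natCast_eq_natCast_iff'] at h2
  rwa [Nat.mod_eq_of_lt hi, Nat.mod_eq_of_lt hj] at h2


lemma contra_aux (k i j m l : ℤ) (hk : 3 ≤ k)
    (hi0 : 0 ≤ i) (hik : i < k) (hj0 : 0 ≤ j) (hjk : j < k)
    (hm0 : 0 ≤ m) (hmk : m < k) (hl0 : 0 ≤ l) (hlk : l < k)
    (hs : j + m = i + l + k)
    (hsq : i ^ 2 + i + l ^ 2 + l = j ^ 2 + j + m ^ 2 + m + 2) : False := by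
  nlinarith [sq_nonneg (j - m), mul_nonneg hi0 hl0,
    mul_nonneg (show (0:ℤ) ≤ i + l by linarith) (show (0:ℤ) ≤ 2 * k - (i + l) by linarith)]

lemma core (k w i j m l ti tj tm tl : ℤ)
    (hk : 3 ≤ k) (hw : k ^ 2 ≤ w)
    (hi0 : 0 ≤ i) (hik : i < k) (hj0 : 0 ≤ j) (hjk : j < k)
    (hm0 : 0 ≤ m) (hmk : m < k) (hl0 : 0 ≤ l) (hlk : l < k)
    (hti : 2 * ti = i ^ 2 + i) (htj : 2 * tj = j ^ 2 + j)
    (htm : 2 * tm = m ^ 2 + m) (htl : 2 * tl = l ^ 2 + l)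
    (hd : (w * k) ∣ (i + l - j - m) + k * (ti + tl - tj - tm))
    (hij : i ≠ j) (hml : m ≠ l) : i = m ∧ j = l := by
  obtain ⟨t, ht⟩ := hd
  set Q : ℤ := ti + tl - tj - tm with hQ
  have hQub : 2 * Q ≤ 2 * k ^ 2 - 2 * k := by nlinarith
  have hQlb : -(2 * k ^ 2 - 2 * k) ≤ 2 * Q := by nlinarith
  have hw0 : (0:ℤ) < w * k := by nlinarith
  have hXub : 2 * ((i + l - j - m) + k * Q) < 2 * (w * k) := by nlinarith
  have hXlb : -(2 * (w * k)) < 2 * ((i + l - j - m) + k * Q) := by nlinarith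
  have ht0 : t = 0 := by
    have h1 : w * k * t < w * k * 1 := by rw [mul_one]; linarith [hXub, ht]
    have h2 : w * k * (-1) < w * k * t := by linarith [hXlb, ht]
    have h3 : t < 1 := lt_of_mul_lt_mul_left h1 (le_of_lt hw0)
    have h4 : (-1:ℤ) < t := lt_of_mul_lt_mul_left h2 (le_of_lt hw0)
    omega
  rw [ht0, mul_zero] at ht
  have hX : (i + l - j - m) + k * Q = 0 := ht
  have hQ1 : Q = 0 ∨ Q = 1 ∨ Q = -1 := by
    rcases lt_trichotomy Q 0 with h | h | h
    · right; right
      have h1 : Q = -1 ∨ Q ≤ -2 := by omega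
      rcases h1 with h2 | h2
      · exact h2
      · exfalso; nlinarith [hX]
    · left; exact h
    · right; left
      have h1 : Q = 1 ∨ 2 ≤ Q := by omega
      rcases h1 with h2 | h2
      · exact h2
      · exfalso; nlinarith [hX]
  rcases hQ1 with h0 | h1 | h2
  · have hs : i + l = j + m := by rw [h0] at hX; linarith
    have hsq : i ^ 2 + l ^ 2 = j ^ 2 + m ^ 2 := by
      have h2Q : (2:ℤ) * Q = 0 := by rw [h0]; ring
      rw [hQ] at h2Q; linarith
    have key : 2 * ((i - j) * (i - m)) = 0 := by
      linear_combination (i - j - m - l) * hs + hsq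
    have key2 : (i - j) * (i - m) = 0 := by linarith
    rcases mul_eq_zero.1 key2 with h | h
    · exact absurd (by linarith : i = j) hij
    · exact ⟨by linarith, by linarith⟩
  · exfalso
    have hs : j + m = i + l + k := by rw [h1] at hX; linarith
    have hsq : i ^ 2 + i + l ^ 2 + l = j ^ 2 + j + m ^ 2 + m + 2 := by
      have h2Q : (2:ℤ) * Q = 2 := by rw [h1]; norm_num
      rw [hQ] at h2Q; linarith
    exact contra_aux k i j m l hk hi0 hik hj0 hjk hm0 hmk hl0 hlk hs hsq
  · exfalso
    have hs : i + l = j + m + k := by rw [h2] at hX; linarith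
    have hsq : j ^ 2 + j + m ^ 2 + m = i ^ 2 + i + l ^ 2 + l + 2 := by
      have h2Q : (2:ℤ) * Q = -2 := by rw [h2]; ring
      rw [hQ] at h2Q; linarith
    exact contra_aux k j i l m hk hj0 hjk hi0 hik hl0 hlk hm0 hmk hs hsq

lemma tcast (i : ℕ) : 2 * (Tn i : ℤ) = (i : ℤ) ^ 2 + i := by
  have h := two_Tn i
  have h2 : ((2 * Tn i : ℕ) : ℤ) = ((i * (i + 1) : ℕ) : ℤ) := congrArg Nat.cast h
  push_cast at h2
  linear_combination h2

lemma sidon (k w : ℕ) (hk : 3 ≤ k) (hw : k ^ 2 ≤ w) {i j m l : ℕ}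
    (hi : i < k) (hj : j < k) (hm : m < k) (hl : l < k)
    (hij : i ≠ j) (hml : m ≠ l)
    (h : fz k w i - fz k w j = fz k w m - fz k w l) : i = m ∧ j = l := by
  have h' : fz k w i + fz k w l = fz k w j + fz k w m := by linear_combination h
  have h'' : (((i + k * Tn i) + (l + k * Tn l) : ℕ) : ZMod (w * k)) =
      (((j + k * Tn j) + (m + k * Tn m) : ℕ) : ZMod (w * k)) := by
    push_cast
    push_cast [fz] at h'
    linear_combination h'
  have hmod := (ZMod.natCast_eq_natCast_iff _ _ _).mp h''
  obtain ⟨c, hc⟩ := hmod.dvd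
  have hdvd : ((w : ℤ) * k) ∣ ((i : ℤ) + l - j - m) + k * ((Tn i : ℤ) + Tn l - Tn j - Tn m) := by
    refine ⟨-c, ?_⟩
    push_cast at hc ⊢
    linarith [hc]
  have hres := core k w i j m l (Tn i) (Tn j) (Tn m) (Tn l)
    (by exact_mod_cast hk) (by exact_mod_cast hw)
    (by positivity) (by exact_mod_cast hi) (by positivity) (by exact_mod_cast hj)
    (by positivity) (by exact_mod_cast hm) (by positivity) (by exact_mod_cast hl)
    (tcast i) (tcast j) (tcast m) (tcast l) hdvd
    (by exact_mod_cast hij) (by exact_mod_cast hml)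
  exact ⟨by exact_mod_cast hres.1, by exact_mod_cast hres.2⟩


section
variable (k w : ℕ)

lemma mem_blk {t x : ZMod (w * k)} :
    x ∈ blk k w t ↔ ∃ i, i < k ∧ fz k w i + t = x := by
  constructor
  · intro hx
    rw [blk, Finset.mem_image] at hx
    obtain ⟨a, ha, hax⟩ := hx
    rw [B0, Finset.mem_image] at ha
    obtain ⟨i, hi, rfl⟩ := ha
    exact ⟨i, Finset.mem_range.mp hi, hax⟩
  · rintro ⟨i, hi, rfl⟩
    rw [blk, Finset.mem_image]
    exact ⟨fz k w i, by rw [B0, Finset.mem_image]; exact ⟨i, Finset.mem_range.mpr hi, rfl⟩, rfl⟩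

lemma B0_card : (B0 k w).card = k := by
  rw [B0, Finset.card_image_of_injOn, Finset.card_range]
  intro i hi j hj h
  exact fz_inj k w (Finset.mem_range.mp hi) (Finset.mem_range.mp hj) h

lemma blk_card (t : ZMod (w * k)) : (blk k w t).card = k := by
  rw [blk, Finset.card_image_of_injective _ (add_left_injective t), B0_card]

lemma blk_injective (hk : 3 ≤ k) (hw : k ^ 2 ≤ w) : Function.Injective (blk k w) := by
  intro t s h
  by_contra hts
  have hk0 : 0 < k := by omega
  have h0t : fz k w 0 + t ∈ blk k w t := (mem_blk k w).mpr ⟨0, hk0, rfl⟩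
  rw [h] at h0t
  obtain ⟨j0, hj0, hj0e⟩ := (mem_blk k w).mp h0t
  have h1t : fz k w j0 + t ∈ blk k w t := (mem_blk k w).mpr ⟨j0, hj0, rfl⟩
  rw [h] at h1t
  obtain ⟨j1, hj1, hj1e⟩ := (mem_blk k w).mp h1t
  have e1 : fz k w 0 - fz k w j0 = s - t := by linear_combination -hj0e
  have e2 : fz k w j0 - fz k w j1 = s - t := by linear_combination -hj1e
  have hne0 : (0 : ℕ) ≠ j0 := by
    intro e
    rw [← e, sub_self] at e1
    exact hts (by linear_combination e1)
  have hne1 : j0 ≠ j1 := by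
    intro e
    rw [← e, sub_self] at e2
    exact hts (by linear_combination e2)
  have := sidon k w hk hw hk0 hj0 hj0 hj1 hne0 hne1 (e1.trans e2.symm)
  exact hne0 this.1

lemma pair_unique (hk : 3 ≤ k) (hw : k ^ 2 ≤ w) {t s x y : ZMod (w * k)} (hxy : x ≠ y)
    (hxt : x ∈ blk k w t) (hyt : y ∈ blk k w t)
    (hxs : x ∈ blk k w s) (hys : y ∈ blk k w s) : t = s := by
  obtain ⟨i, hi, hie⟩ := (mem_blk k w).mp hxt
  obtain ⟨j, hj, hje⟩ := (mem_blk k w).mp hyt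
  obtain ⟨m, hm, hme⟩ := (mem_blk k w).mp hxs
  obtain ⟨l, hl, hle⟩ := (mem_blk k w).mp hys
  have hij : i ≠ j := by
    rintro rfl
    exact hxy (hie ▸ hje ▸ rfl)
  have hml : m ≠ l := by
    rintro rfl
    exact hxy (hme ▸ hle ▸ rfl)
  have hdif : fz k w i - fz k w j = fz k w m - fz k w l := by
    linear_combination hie - hje - hme + hle
  obtain ⟨him, hjl⟩ := sidon k w hk hw hi hj hm hl hij hml hdif
  rw [him] at hie
  linear_combination hie - hme

end

section
variable (k w : ℕ) [NeZero (w * k)] [NeZero k]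

lemma val_cast (c : ZMod k) : ((c.val : ℕ) : ZMod k) = c := ZMod.natCast_rightInverse c

lemma mem_cls {c : ZMod k} {b : Finset (ZMod (w * k))} :
    b ∈ cls k w c ↔ ∃ t, phi k w t = c ∧ blk k w t = b := by
  constructor
  · intro hb
    rw [cls, Finset.mem_image] at hb
    obtain ⟨t, ht, rfl⟩ := hb
    exact ⟨t, (Finset.mem_filter.mp ht).2, rfl⟩
  · rintro ⟨t, ht, rfl⟩
    rw [cls, Finset.mem_image]
    exact ⟨t, Finset.mem_filter.mpr ⟨Finset.mem_univ t, ht⟩, rfl⟩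

lemma blk_mem_cls_iff (hk : 3 ≤ k) (hw : k ^ 2 ≤ w) {c : ZMod k} {t : ZMod (w * k)} :
    blk k w t ∈ cls k w c ↔ phi k w t = c := by
  rw [mem_cls]
  constructor
  · rintro ⟨t', ht', he⟩
    rwa [blk_injective k w hk hw he] at ht'
  · intro h
    exact ⟨t, h, rfl⟩

lemma nat_cast_zmod_inj {i j : ℕ} (hi : i < k) (hj : j < k)
    (h : (i : ZMod k) = (j : ZMod k)) : i = j := by
  rw [ZMod.natCast_eq_natCast_iff'] at h
  rwa [Nat.mod_eq_of_lt hi, Nat.mod_eq_of_lt hj] at h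

lemma cls_cover (c : ZMod k) (hk0 : 0 < k) (x : ZMod (w * k)) :
    ∃ b ∈ cls k w c, x ∈ b := by
  set i : ℕ := (phi k w x - c).val with hidef
  have hik : i < k := ZMod.val_lt _
  refine ⟨blk k w (x - fz k w i), ?_, ?_⟩
  · rw [mem_cls]
    refine ⟨x - fz k w i, ?_, rfl⟩
    rw [map_sub, phi_fz, hidef, val_cast]
    ring
  · exact (mem_blk k w).mpr ⟨i, hik, by ring⟩

lemma cls_disj {c : ZMod k} {b₁ b₂ : Finset (ZMod (w * k))}
    (h₁ : b₁ ∈ cls k w c) (h₂ : b₂ ∈ cls k w c) (hne : b₁ ≠ b₂) : Disjoint b₁ b₂ := by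
  obtain ⟨t₁, ht₁, rfl⟩ := (mem_cls k w).mp h₁
  obtain ⟨t₂, ht₂, rfl⟩ := (mem_cls k w).mp h₂
  rw [Finset.disjoint_left]
  intro x hx1 hx2
  obtain ⟨i, hi, hie⟩ := (mem_blk k w).mp hx1
  obtain ⟨m, hm, hme⟩ := (mem_blk k w).mp hx2
  have hphi : (i : ZMod k) + phi k w t₁ = (m : ZMod k) + phi k w t₂ := by
    have := congrArg (phi k w) (hie.trans hme.symm)
    rwa [map_add, map_add, phi_fz, phi_fz] at this
  rw [ht₁, ht₂] at hphi
  have him : i = m := nat_cast_zmod_inj k (by exact hi) hm (add_right_cancel hphi)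
  rw [him] at hie
  have : t₁ = t₂ := by
    have := hie.trans hme.symm
    exact add_left_cancel this
  exact hne (by rw [this])

lemma phi_val_cast (c : ZMod k) : phi k w ((c.val : ℕ) : ZMod (w * k)) = c := by
  rw [map_natCast, val_cast]

lemma cls_injective (hk : 3 ≤ k) (hw : k ^ 2 ≤ w) : Function.Injective (cls k w) := by
  intro c₁ c₂ h
  have hmem : blk k w ((c₁.val : ℕ) : ZMod (w * k)) ∈ cls k w c₁ :=
    (blk_mem_cls_iff k w hk hw).mpr (phi_val_cast k w c₁)
  rw [h] at hmem
  have h2 := (blk_mem_cls_iff k w hk hw).mp hmem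
  rw [phi_val_cast] at h2
  exact h2

lemma blk_shift (t : ZMod (w * k)) : (blk k w t).image (· + 1) = blk k w (t + 1) := by
  rw [blk, blk, Finset.image_image]
  apply Finset.image_congr
  intro x _
  simp [add_assoc]

lemma cls_shift (c : ZMod k) : (cls k w c).image (fun b => b.image (· + 1)) = cls k w (c + 1) := by
  rw [cls, cls, Finset.image_image]
  have h1 : ((Finset.univ.filter (fun t => phi k w t = c)).image
      ((fun b : Finset (ZMod (w * k)) => b.image (· + 1)) ∘ blk k w)) =
      (Finset.univ.filter (fun t => phi k w t = c)).image (fun t => blk k w (t + 1)) := by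
    apply Finset.image_congr
    intro t _
    exact blk_shift k w t
  rw [h1]
  have h2 : (Finset.univ.filter (fun t => phi k w t = c + 1)) =
      (Finset.univ.filter (fun t => phi k w t = c)).image (· + 1) := by
    ext s
    simp only [Finset.mem_filter, Finset.mem_image, Finset.mem_univ, true_and]
    constructor
    · intro hs
      refine ⟨s - 1, ?_, by ring⟩
      rw [map_sub, hs, map_one]
      ring
    · rintro ⟨t, ht, rfl⟩
      rw [map_add, ht, map_one]
  rw [h2, Finset.image_image]
  rfl

end

end CRCaux

open CRCaux Finset

/-- For all k ≥ 3 and w ≥ k², there exists a cyclic resolvable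
(wk,k)-configuration. -/
theorem cyclic_resolvable_config_general (k w : ℕ) (hk : 3 ≤ k) (hw : k ^ 2 ≤ w) :
    ExistsCyclicResolvableConfig (w * k) k := by
  classical
  have hk0 : 0 < k := by omega
  haveI : NeZero k := ⟨by omega⟩
  have hw0 : 0 < w := lt_of_lt_of_le (by positivity) hw
  haveI : NeZero (w * k) := ⟨Nat.mul_ne_zero (by omega) (by omega)⟩
  refine ⟨Finset.univ.image (blk k w), Finset.univ.image (cls k w), ⟨?_, ?_, ?_, ?_⟩,
    ⟨?_, ?_, ?_⟩, ?_⟩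
  · rw [Finset.card_image_of_injective _ (blk_injective k w hk hw), Finset.card_univ, ZMod.card]
  · intro b hb
    obtain ⟨t, _, rfl⟩ := Finset.mem_image.mp hb
    exact blk_card k w t
  · intro b₁ h₁ b₂ h₂ x y hxy hx1 hy1 hx2 hy2
    obtain ⟨t₁, _, rfl⟩ := Finset.mem_image.mp h₁
    obtain ⟨t₂, _, rfl⟩ := Finset.mem_image.mp h₂
    exact congrArg (blk k w) (pair_unique k w hk hw hxy hx1 hy1 hx2 hy2)
  · intro x
    have him : (Finset.univ.image (blk k w)).filter (fun b => x ∈ b) =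
        (Finset.univ.filter (fun t => x ∈ blk k w t)).image (blk k w) := by
      rw [Finset.filter_image]
    rw [him, Finset.card_image_of_injective _ (blk_injective k w hk hw)]
    have hset : Finset.univ.filter (fun t => x ∈ blk k w t) =
        (Finset.range k).image (fun i => x - fz k w i) := by
      ext t
      simp only [Finset.mem_filter, Finset.mem_univ, true_and, Finset.mem_image,
        Finset.mem_range, mem_blk]
      constructor
      · rintro ⟨i, hi, he⟩
        exact ⟨i, hi, by linear_combination -he⟩
      · rintro ⟨i, hi, rfl⟩
        exact ⟨i, hi, by ring⟩
    rw [hset, Finset.card_image_of_injOn, Finset.card_range]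
    intro i hi j hj h
    refine fz_inj k w (Finset.mem_range.mp hi) (Finset.mem_range.mp hj) ?_
    linear_combination -h
  · rw [Finset.card_image_of_injective _ (cls_injective k w hk hw), Finset.card_univ, ZMod.card]
  · intro P hP
    obtain ⟨c, _, rfl⟩ := Finset.mem_image.mp hP
    constructor
    · intro b hb
      obtain ⟨t, _, rfl⟩ := (mem_cls k w).mp hb
      exact Finset.mem_image.mpr ⟨t, Finset.mem_univ t, rfl⟩
    · exact ⟨fun x => cls_cover k w c hk0 x, fun b₁ h₁ b₂ h₂ hne => cls_disj k w h₁ h₂ hne⟩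
  · intro b hb
    obtain ⟨t, _, rfl⟩ := Finset.mem_image.mp hb
    refine ⟨cls k w (phi k w t), ⟨Finset.mem_image.mpr ⟨phi k w t, Finset.mem_univ _, rfl⟩,
      (blk_mem_cls_iff k w hk hw).mpr rfl⟩, ?_⟩
    rintro P ⟨hPR, hbP⟩
    obtain ⟨c, _, rfl⟩ := Finset.mem_image.mp hPR
    have hc := (blk_mem_cls_iff k w hk hw).mp hbP
    rw [hc]
  · intro P hP
    obtain ⟨c, _, rfl⟩ := Finset.mem_image.mp hP
    rw [cls_shift k w c]
    exact Finset.mem_image.mpr ⟨c + 1, Finset.mem_univ _, rfl⟩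
end
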